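/- Let K ⊆ L be finite fields, C ⊆ L^m a K-linear code with column-space tuple 𝒱 = (V_1,...,V_m) for a generator matrix A, and f : C → L^m a K-linear map with column-space tuple 𝒰 = (U_1,...,U_m). Then f extends to a K-monomial map of L^m if and only if there exists a permutation π ∈ S_m with V_i = U_{π(i)} for all i. -/

import Mathlib

/-!
For a single column `c ∈ L^k`, the column space is `{(ℓ (c i))ᵢ : ℓ ∈ Hom_K(L, K)}`, and its
orthogonal complement under the dot product is the space of `K`-linear relations among the `c i`.
Hence two columns have the same column space iff they satisfy the same linear relations, i.e. iff
some `K`-automorphism of `L` carries one to the other. A `K`-monomial map is determined by its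
values on the rows of `A`, so `f` extends to one exactly when, after permuting, each column of `A'`
is the image of the corresponding column of `A` under a `K`-automorphism of `L`.
-/

open Module Submodule

namespace LinearMap

variable {R M N N' : Type*} [Ring R] [AddCommGroup M] [Module R M]
  [AddCommGroup N] [Module R N] [AddCommGroup N'] [Module R N']

noncomputable def rangeEquivOfKerEq {T : M →ₗ[R] N} {T' : M →ₗ[R] N'} (h : ker T = ker T') :
    range T ≃ₗ[R] range T' :=
  T.quotKerEquivRange.symm ≪≫ₗ quotEquivOfEq _ _ h ≪≫ₗ T'.quotKerEquivRange

@[simp]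
lemma rangeEquivOfKerEq_rangeRestrict {T : M →ₗ[R] N} {T' : M →ₗ[R] N'} (h : ker T = ker T')
    (x : M) : rangeEquivOfKerEq h (T.rangeRestrict x) = T'.rangeRestrict x := by
  have hx : T.quotKerEquivRange.symm (T.rangeRestrict x) = (ker T).mkQ x :=
    T.quotKerEquivRange_symm_apply_image x _
  ext
  simp [rangeEquivOfKerEq, hx]

end LinearMap

lemma LinearEquiv.exists_extend {K V : Type*} [Field K] [AddCommGroup V] [Module K V]
    [FiniteDimensional K V] {p q : Submodule K V} (e : p ≃ₗ[K] q) :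
    ∃ g : V ≃ₗ[K] V, ∀ x : p, g x = e x := by
  obtain ⟨P, hP⟩ := p.exists_isCompl
  obtain ⟨Q, hQ⟩ := q.exists_isCompl
  have hPQ : finrank K P = finrank K Q := by
    have := e.finrank_eq
    have := finrank_add_eq_of_isCompl hP
    have := finrank_add_eq_of_isCompl hQ
    omega
  refine ⟨(prodEquivOfIsCompl p P hP).symm ≪≫ₗ e.prodCongr (.ofFinrankEq P Q hPQ) ≪≫ₗ
    prodEquivOfIsCompl q Q hQ, fun x => ?_⟩
  simp

lemma LinearMap.exists_linearEquiv_comp_eq_of_ker_eq {K M V : Type*} [Field K]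
    [AddCommGroup M] [Module K M] [AddCommGroup V] [Module K V] [FiniteDimensional K V]
    {T T' : M →ₗ[K] V} (h : ker T = ker T') : ∃ g : V ≃ₗ[K] V, ∀ x, g (T x) = T' x := by
  obtain ⟨g, hg⟩ := (rangeEquivOfKerEq h).exists_extend
  exact ⟨g, fun x => by simpa using hg (T.rangeRestrict x)⟩

section ColumnSpace

variable (K : Type*) {L L' ι : Type*} [Field K] [AddCommGroup L] [Module K L]
  [AddCommGroup L'] [Module K L']

/-- Basis-free form of the column space; `span_basis_repr_eq_columnSpace` recovers the definition
through coordinates in a `K`-basis of `L`. -/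
def columnSpace (c : ι → L) : Submodule K (ι → K) :=
  LinearMap.range (LinearMap.pi fun i => LinearMap.applyₗ (c i) : Dual K L →ₗ[K] ι → K)

variable {K}

lemma mem_columnSpace_iff {c : ι → L} {y : ι → K} :
    y ∈ columnSpace K c ↔ ∃ ℓ : Dual K L, ∀ i, ℓ (c i) = y i := by
  simp [columnSpace, funext_iff]

lemma span_basis_repr_eq_columnSpace {κ : Type*} [Finite κ] (b : Basis κ K L) (c : ι → L) :
    span K (Set.range fun t i => b.repr (c i) t) = columnSpace K c := by
  classical
  rw [columnSpace, LinearMap.range_eq_map, ← b.dualBasis.span_eq, map_span, ← Set.range_comp]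
  congr
  ext t i
  simp

lemma columnSpace_linearEquiv_comp (g : L ≃ₗ[K] L') (c : ι → L) :
    columnSpace K (fun i => g (c i)) = columnSpace K c := by
  ext y
  simp only [mem_columnSpace_iff]
  exact ⟨fun ⟨ℓ, h⟩ => ⟨ℓ ∘ₗ g.toLinearMap, h⟩,
    fun ⟨ℓ, h⟩ => ⟨ℓ ∘ₗ g.symm.toLinearMap, by simpa using h⟩⟩

variable [Fintype ι]

lemma mem_ker_linearCombination_iff (c : ι → L) (x : ι → K) :
    x ∈ LinearMap.ker (Fintype.linearCombination K c) ↔ ∀ y ∈ columnSpace K c, x ⬝ᵥ y = 0 := by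
  rw [LinearMap.mem_ker, ← forall_dual_apply_eq_zero_iff K]
  simp [columnSpace, Fintype.linearCombination_apply, dotProduct]

theorem columnSpace_eq_iff_exists_linearEquiv [FiniteDimensional K L] (c c' : ι → L) :
    columnSpace K c = columnSpace K c' ↔ ∃ g : L ≃ₗ[K] L, ∀ i, g (c i) = c' i := by
  constructor
  · intro h
    have hker : LinearMap.ker (Fintype.linearCombination K c) =
        LinearMap.ker (Fintype.linearCombination K c') := by
      ext x; simp only [mem_ker_linearCombination_iff, h]
    obtain ⟨g, hg⟩ := LinearMap.exists_linearEquiv_comp_eq_of_ker_eq hker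
    classical
    exact ⟨g, fun i => by simpa using hg (Pi.single i 1)⟩
  · rintro ⟨g, hg⟩
    obtain rfl : c' = fun i => g (c i) := funext fun i => (hg i).symm
    exact (columnSpace_linearEquiv_comp g c).symm

end ColumnSpace

lemma Submodule.linearMap_eq_iff_of_span_range {R M N ι : Type*} [Semiring R] [AddCommMonoid M]
    [Module R M] [AddCommMonoid N] [Module R N] {v : ι → M}
    {f φ : span R (Set.range v) →ₗ[R] N} :
    f = φ ↔ ∀ i, f ⟨v i, subset_span (Set.mem_range_self i)⟩ =
      φ ⟨v i, subset_span (Set.mem_range_self i)⟩ :=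
  ⟨fun h _ => h ▸ rfl, LinearMap.ext_on_range ((span_range_subtype_eq_top_iff _ _).2 rfl)⟩

lemma Equiv.Perm.exists_comp_eq_comm {α β : Type*} {u w : α → β} :
    (∃ π : Perm α, ∀ i, u i = w (π i)) ↔ ∃ π : Perm α, ∀ i, w i = u (π i) := by
  constructor <;> rintro ⟨π, h⟩ <;> exact ⟨π⁻¹, fun i => by simp [h]⟩

theorem stmt_17_general (K L : Type*) [Field K] [Field L]
    [Algebra K L]
    (n : ℕ) (b : Module.Basis (Fin n) K L)
    (k m : ℕ) (A : Fin k → (Fin m → L))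
    (f : (Submodule.span K (Set.range A) : Submodule K (Fin m → L)) →ₗ[K] (Fin m → L))
    (A' : Fin k → (Fin m → L))
    (hA' : ∀ i, A' i = f ⟨A i, Submodule.subset_span (Set.mem_range_self i)⟩)
    (V U : Fin m → Submodule K (Fin k → K))
    (hV : ∀ j, V j = Submodule.span K
      (Set.range fun t : Fin n => fun i : Fin k => b.repr (A i j) t))
    (hU : ∀ j, U j = Submodule.span K
      (Set.range fun t : Fin n => fun i : Fin k => b.repr (A' i j) t)) :
    (∃ (π : Equiv.Perm (Fin m)) (g : Fin m → (L ≃ₗ[K] L)),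
      ∀ (c : (Submodule.span K (Set.range A) : Submodule K (Fin m → L))) (i : Fin m),
        f c i = g i ((c : Fin m → L) (π i))) ↔
    (∃ π : Equiv.Perm (Fin m), ∀ i, V i = U (π i)) := by
  have : FiniteDimensional K L := Module.Finite.of_basis b
  have hcol (π : Equiv.Perm (Fin m)) (i : Fin m) :
      (∃ g : L ≃ₗ[K] L, ∀ r, g (A r (π i)) = A' r i) ↔ U i = V (π i) := by
    rw [hU, hV, span_basis_repr_eq_columnSpace, span_basis_repr_eq_columnSpace, eq_comm,
      columnSpace_eq_iff_exists_linearEquiv]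
  have hmonomial (π : Equiv.Perm (Fin m)) (g : Fin m → L ≃ₗ[K] L) :
      (∀ c : span K (Set.range A), ∀ i, f c i = g i (c.1 (π i))) ↔
        ∀ i r, g i (A r (π i)) = A' r i := by
    let φ := (LinearMap.pi fun i => (g i).toLinearMap ∘ₗ LinearMap.proj (π i)) ∘ₗ
      (span K (Set.range A)).subtype
    have := linearMap_eq_iff_of_span_range (f := f) (φ := φ)
    simp only [LinearMap.ext_iff, funext_iff, ← hA'] at this
    simpa [φ, forall_comm (α := Fin k), eq_comm] using this
  calc _ ↔ ∃ (π : Equiv.Perm (Fin m)) (g : Fin m → L ≃ₗ[K] L),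
          ∀ i r, g i (A r (π i)) = A' r i := by
        simp only [hmonomial]
    _ ↔ ∃ π : Equiv.Perm (Fin m), ∀ i, U i = V (π i) := by
        simp only [← hcol, Classical.skolem]
    _ ↔ _ := Equiv.Perm.exists_comp_eq_comm

theorem stmt_17 (K L : Type*) [Field K] [Fintype K] [Field L] [Fintype L]
    [Algebra K L]
    (n : ℕ) (b : Module.Basis (Fin n) K L)
    (k m : ℕ) (A : Fin k → (Fin m → L)) (hA : LinearIndependent K A)
    (f : (Submodule.span K (Set.range A) : Submodule K (Fin m → L)) →ₗ[K] (Fin m → L))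
    (A' : Fin k → (Fin m → L))
    (hA' : ∀ i, A' i = f ⟨A i, Submodule.subset_span (Set.mem_range_self i)⟩)
    (V U : Fin m → Submodule K (Fin k → K))
    (hV : ∀ j, V j = Submodule.span K
      (Set.range fun t : Fin n => fun i : Fin k => b.repr (A i j) t))
    (hU : ∀ j, U j = Submodule.span K
      (Set.range fun t : Fin n => fun i : Fin k => b.repr (A' i j) t)) :
    (∃ (π : Equiv.Perm (Fin m)) (g : Fin m → (L ≃ₗ[K] L)),
      ∀ (c : (Submodule.span K (Set.range A) : Submodule K (Fin m → L))) (i : Fin m),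
        f c i = g i ((c : Fin m → L) (π i))) ↔
    (∃ π : Equiv.Perm (Fin m), ∀ i, V i = U (π i)) :=
  stmt_17_general K L n b k m A f A' hA' V U hV hU
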